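/- arXiv:1608.06057 — 2 statements merged into one kernel-verified Lean document; each statement's English description precedes it below -/
import Mathlib

section
/- Let A ⊆ ℝ² be a down-closed convex set (if a ∈ A and b ≤ a coordinatewise then b ∈ A) such that for each coordinate direction the supremum is attained. Then for any family of point-pairs: sup_{(a₁,a₂) ∈ A} min_{α∈[0,1]} (α a₁ + (1−α) a₂) = min_{α∈[0,1]} sup_{(a₁,a₂)∈A} (α a₁ + (1−α) a₂), i.e., min and sup can be interchanged for linear functionals indexed by the 1-simplex over a convex constraint set. -/
/-!
Weak duality gives `≤`, since `min a₁ a₂` lies below every convex combination of `a₁` and `a₂`.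
Conversely, if `v` is the left-hand side, `A` misses the open quadrant `(v, ∞)²`. A line
separating them has a normal with nonnegative coordinates, because the quadrant is unbounded in
both coordinate directions; normalized to the simplex, this normal is an `α` with
`α a₁ + (1 - α) a₂ ≤ v` on `A`.
-/

open Set

lemma LinearMap.apply_eq_fst_smul_add_snd_smul {R M : Type*} [Semiring R] [AddCommMonoid M]
    [Module R M] (f : R × R →ₗ[R] M) (p : R × R) :
    f p = p.1 • f (1, 0) + p.2 • f (0, 1) := by
  calc f p = f (p.1 • (1, 0) + p.2 • (0, 1)) := by congr 1; ext <;> simp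
    _ = p.1 • f (1, 0) + p.2 • f (0, 1) := by rw [map_add, map_smul, map_smul]

lemma LinearMap.map_nonpos_of_forall_map_add_smul_le {𝕜 E : Type*} [Field 𝕜] [LinearOrder 𝕜]
    [IsStrictOrderedRing 𝕜] [AddCommGroup E] [Module 𝕜 E] (f : E →ₗ[𝕜] 𝕜) {x e : E} {u : 𝕜}
    (h : ∀ t : 𝕜, 0 ≤ t → f (x + t • e) ≤ u) : f e ≤ 0 := by
  by_contra! he
  have := h ((|u - f x| + 1) / f e) (by positivity)
  rw [map_add, map_smul, smul_eq_mul, div_mul_cancel₀ _ he.ne'] at this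
  linarith [le_abs_self (u - f x)]

lemma min_le_convex_combination {𝕜 : Type*} [Field 𝕜] [LinearOrder 𝕜] [IsStrictOrderedRing 𝕜]
    {α : 𝕜} (hα : α ∈ Icc (0 : 𝕜) 1) (x y : 𝕜) : min x y ≤ α * x + (1 - α) * y := by
  obtain ⟨h0, h1⟩ := hα
  have h1' : 0 ≤ 1 - α := sub_nonneg.2 h1
  calc min x y = α * min x y + (1 - α) * min x y := by ring
    _ ≤ α * x + (1 - α) * y := by gcongr; exacts [min_le_left x y, min_le_right x y]

theorem exists_nonneg_weights_le_of_min_le {A : Set (ℝ × ℝ)} (hA : Convex ℝ A) (hne : A.Nonempty)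
    {v : ℝ} (hv : ∀ a ∈ A, min a.1 a.2 ≤ v) :
    ∃ b₁ b₂ : ℝ, 0 ≤ b₁ ∧ 0 ≤ b₂ ∧ 0 < b₁ + b₂ ∧ ∀ a ∈ A, b₁ * a.1 + b₂ * a.2 ≤ (b₁ + b₂) * v := by
  set Q := Ioi v ×ˢ Ioi v
  have hdisj : Disjoint Q A := by
    rw [disjoint_left]
    rintro q ⟨hq₁, hq₂⟩ hqA
    exact (hv q hqA).not_gt (lt_min hq₁ hq₂)
  obtain ⟨f, u, hfQ, hfA⟩ := geometric_hahn_banach_open ((convex_Ioi v).prod (convex_Ioi v))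
    (isOpen_Ioi.prod isOpen_Ioi) hA hdisj
  have hf (p : ℝ × ℝ) : f p = p.1 * f (1, 0) + p.2 * f (0, 1) :=
    f.toLinearMap.apply_eq_fst_smul_add_snd_smul p
  have hQ : ((v + 1, v + 1) : ℝ × ℝ) ∈ Q := ⟨by simp, by simp⟩
  have hnonpos {e : ℝ × ℝ} (he₁ : 0 ≤ e.1) (he₂ : 0 ≤ e.2) : f e ≤ 0 := by
    refine f.toLinearMap.map_nonpos_of_forall_map_add_smul_le (x := (v + 1, v + 1))
      fun t ht => (hfQ _ ⟨?_, ?_⟩).le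
    all_goals
      simp only [Prod.fst_add, Prod.snd_add, Prod.smul_fst, Prod.smul_snd, smul_eq_mul, mem_Ioi]
      nlinarith [mul_nonneg ht he₁, mul_nonneg ht he₂]
  have hcorner : f (v, v) ≤ u := by
    have hcl : closure Q ⊆ {p | f p ≤ u} :=
      closure_minimal (fun q hq => (hfQ q hq).le) (isClosed_le f.continuous continuous_const)
    exact hcl (by rw [closure_prod_eq, closure_Ioi]; exact ⟨le_refl v, le_refl v⟩)
  have h₁ : f (1, 0) ≤ 0 := hnonpos (e := (1, 0)) zero_le_one le_rfl
  have h₂ : f (0, 1) ≤ 0 := hnonpos (e := (0, 1)) le_rfl zero_le_one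
  refine ⟨-f (1, 0), -f (0, 1), neg_nonneg.2 h₁, neg_nonneg.2 h₂, ?_, fun a ha => ?_⟩
  · obtain ⟨a, ha⟩ := hne
    by_contra! h0
    have hf₁ : f (1, 0) = 0 := by linarith
    have hf₂ : f (0, 1) = 0 := by linarith
    have := (hfQ _ hQ).trans_le (hfA a ha)
    rw [hf, hf a, hf₁, hf₂] at this
    simp at this
  · have := hcorner.trans (hfA a ha)
    rw [hf, hf a] at this
    linarith

theorem exists_mem_Icc_forall_le_of_min_le {A : Set (ℝ × ℝ)} (hA : Convex ℝ A) {v : ℝ}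
    (hv : ∀ a ∈ A, min a.1 a.2 ≤ v) :
    ∃ α ∈ Icc (0 : ℝ) 1, ∀ a ∈ A, α * a.1 + (1 - α) * a.2 ≤ v := by
  obtain rfl | hne := A.eq_empty_or_nonempty
  · exact ⟨0, ⟨le_rfl, zero_le_one⟩, by simp⟩
  obtain ⟨b₁, b₂, hb₁, hb₂, hb, hbA⟩ := exists_nonneg_weights_le_of_min_le hA hne hv
  refine ⟨b₁ / (b₁ + b₂), ⟨by positivity, (div_le_one hb).2 (by linarith)⟩, fun a ha => ?_⟩
  have h1 : 1 - b₁ / (b₁ + b₂) = b₂ / (b₁ + b₂) := by field_simp; ring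
  rw [h1, div_mul_eq_mul_div, div_mul_eq_mul_div, ← add_div, div_le_iff₀ hb]
  linarith [hbA a ha]

theorem minimax_interchange_R2_general
    (A : Set (ℝ × ℝ)) (hconv : Convex ℝ A)
    (h1 : ∃ a ∈ A, ∀ b ∈ A, b.1 ≤ a.1)
    (h2 : ∃ a ∈ A, ∀ b ∈ A, b.2 ≤ a.2) :
    sSup {r : ℝ | ∃ a ∈ A, r = min a.1 a.2}
      = sInf {r : ℝ | ∃ α ∈ Set.Icc (0:ℝ) 1,
          r = sSup {s : ℝ | ∃ a ∈ A, s = α * a.1 + (1 - α) * a.2}} := by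
  obtain ⟨a₁, ha₁A, ha₁⟩ := h1
  obtain ⟨a₂, -, ha₂⟩ := h2
  set v := sSup {r : ℝ | ∃ a ∈ A, r = min a.1 a.2}
  have hv (a : ℝ × ℝ) (ha : a ∈ A) : min a.1 a.2 ≤ v :=
    le_csSup ⟨a₁.1, by rintro _ ⟨b, hb, rfl⟩; exact (min_le_left _ _).trans (ha₁ b hb)⟩ ⟨a, ha, rfl⟩
  have hlow : v ∈ lowerBounds {r : ℝ | ∃ α ∈ Icc (0 : ℝ) 1,
      r = sSup {s : ℝ | ∃ a ∈ A, s = α * a.1 + (1 - α) * a.2}} := by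
    rintro _ ⟨α, hα, rfl⟩
    have hbdd : BddAbove {s : ℝ | ∃ a ∈ A, s = α * a.1 + (1 - α) * a.2} := by
      refine ⟨α * a₁.1 + (1 - α) * a₂.2, ?_⟩
      rintro _ ⟨b, hb, rfl⟩
      nlinarith [ha₁ b hb, ha₂ b hb, hα.1, hα.2]
    refine csSup_le ⟨_, a₁, ha₁A, rfl⟩ ?_
    rintro _ ⟨a, ha, rfl⟩
    exact (min_le_convex_combination hα a.1 a.2).trans (le_csSup hbdd ⟨a, ha, rfl⟩)
  obtain ⟨α₀, hα₀, hα₀A⟩ := exists_mem_Icc_forall_le_of_min_le hconv hv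
  refine le_antisymm (le_csInf ⟨_, 0, ⟨le_rfl, zero_le_one⟩, rfl⟩ hlow) ?_
  calc _ ≤ sSup {s : ℝ | ∃ a ∈ A, s = α₀ * a.1 + (1 - α₀) * a.2} :=
        csInf_le ⟨v, hlow⟩ ⟨α₀, hα₀, rfl⟩
    _ ≤ v := csSup_le ⟨_, a₁, ha₁A, rfl⟩ (by rintro _ ⟨a, ha, rfl⟩; exact hα₀A a ha)

/-- Min–max interchange over a down-closed convex subset of `ℝ²` whose coordinatewise suprema
are attained: the sup of the min of the coordinates equals the min over the simplex of the
sup of the corresponding linear functional. -/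
theorem minimax_interchange_R2
    (A : Set (ℝ × ℝ)) (hne : A.Nonempty) (hconv : Convex ℝ A)
    (hdown : ∀ a ∈ A, ∀ b : ℝ × ℝ, b.1 ≤ a.1 → b.2 ≤ a.2 → b ∈ A)
    (h1 : ∃ a ∈ A, ∀ b ∈ A, b.1 ≤ a.1)
    (h2 : ∃ a ∈ A, ∀ b ∈ A, b.2 ≤ a.2) :
    sSup {r : ℝ | ∃ a ∈ A, r = min a.1 a.2}
      = sInf {r : ℝ | ∃ α ∈ Set.Icc (0:ℝ) 1,
          r = sSup {s : ℝ | ∃ a ∈ A, s = α * a.1 + (1 - α) * a.2}} :=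
  minimax_interchange_R2_general A hconv h1 h2
end

section
/- Let T₁, T₂ : 𝒫 → ℝ be functions on a set 𝒫 of probability distributions such that the set A = {a ∈ ℝ² : ∃ P ∈ 𝒫, a₁ ≤ T₁(P) and a₂ ≤ T₂(P)} is convex and both functions are bounded above on 𝒫. Then sup_{P∈𝒫} min{T₁(P), T₂(P)} = min_{α∈[0,1]} sup_{P∈𝒫} (α T₁(P) + (1−α) T₂(P)). -/
/-- Abstract min–max interchange: if the achievable region generated by `T₁, T₂` is convex and
both functionals are bounded above, then
`sup_P min{T₁(P), T₂(P)} = min_{α∈[0,1]} sup_P (α T₁(P) + (1−α) T₂(P))`. -/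
theorem minimax_interchange_abstract
    {P : Type*} [Nonempty P] (T₁ T₂ : P → ℝ)
    (hconv : Convex ℝ {a : ℝ × ℝ | ∃ p : P, a.1 ≤ T₁ p ∧ a.2 ≤ T₂ p})
    (hbdd1 : BddAbove (Set.range T₁)) (hbdd2 : BddAbove (Set.range T₂)) :
    (⨆ p : P, min (T₁ p) (T₂ p))
      = sInf {r : ℝ | ∃ α ∈ Set.Icc (0:ℝ) 1,
          r = ⨆ p : P, (α * T₁ p + (1 - α) * T₂ p)} := by
  obtain ⟨b₁, hb₁⟩ := hbdd1
  obtain ⟨b₂, hb₂⟩ := hbdd2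
  have hb₁' : ∀ p, T₁ p ≤ b₁ := fun p => hb₁ ⟨p, rfl⟩
  have hb₂' : ∀ p, T₂ p ≤ b₂ := fun p => hb₂ ⟨p, rfl⟩
  set A := {a : ℝ × ℝ | ∃ p : P, a.1 ≤ T₁ p ∧ a.2 ≤ T₂ p} with hA
  set S := ⨆ p : P, min (T₁ p) (T₂ p) with hSdef
  set Rset := {r : ℝ | ∃ α ∈ Set.Icc (0:ℝ) 1,
      r = ⨆ p : P, (α * T₁ p + (1 - α) * T₂ p)} with hRset
  have hbddmin : BddAbove (Set.range fun p => min (T₁ p) (T₂ p)) :=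
    ⟨b₁, by rintro _ ⟨p, rfl⟩; exact le_trans (min_le_left _ _) (hb₁' p)⟩
  have hminle : ∀ p, min (T₁ p) (T₂ p) ≤ S := fun p => le_ciSup hbddmin p
  have hbddmix : ∀ α ∈ Set.Icc (0:ℝ) 1,
      BddAbove (Set.range fun p => α * T₁ p + (1 - α) * T₂ p) := by
    rintro α ⟨h0, h1⟩
    refine ⟨α * b₁ + (1 - α) * b₂, ?_⟩
    rintro _ ⟨p, rfl⟩
    have h1 := mul_le_mul_of_nonneg_left (hb₁' p) h0
    have h2 := mul_le_mul_of_nonneg_left (hb₂' p) (by linarith : (0:ℝ) ≤ 1 - α)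
    simp only []
    linarith
  -- every element of Rset is ≥ S
  have hlow : ∀ r ∈ Rset, S ≤ r := by
    rintro r ⟨α, hα, rfl⟩
    refine ciSup_le fun p => ?_
    refine le_trans ?_ (le_ciSup (hbddmix α hα) p)
    obtain ⟨h0, h1⟩ := hα
    have h₁ : min (T₁ p) (T₂ p) ≤ T₁ p := min_le_left _ _
    have h₂ : min (T₁ p) (T₂ p) ≤ T₂ p := min_le_right _ _
    nlinarith
  have hne : Rset.Nonempty := by
    exact ⟨_, 1, ⟨zero_le_one, le_refl 1⟩, rfl⟩
  have hbddbelow : BddBelow Rset := ⟨S, fun r hr => hlow r hr⟩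
  refine le_antisymm (le_csInf hne hlow) ?_
  refine le_of_forall_pos_le_add fun ε hε => ?_
  -- the point (S+ε, S+ε) is not in the closure of A
  have hx : ((S + ε, S + ε) : ℝ × ℝ) ∉ closure A := by
    intro h
    rw [Metric.mem_closure_iff] at h
    obtain ⟨b, hbA, hdist⟩ := h ε hε
    rw [Prod.dist_eq] at hdist
    have h1 : |S + ε - b.1| < ε := lt_of_le_of_lt (le_max_left _ _) hdist
    have h2 : |S + ε - b.2| < ε := lt_of_le_of_lt (le_max_right _ _) hdist
    have hb1 : S < b.1 := by have := abs_lt.mp h1; linarith [this.2]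
    have hb2 : S < b.2 := by have := abs_lt.mp h2; linarith [this.2]
    obtain ⟨p, hp1, hp2⟩ := hbA
    have : S < min (T₁ p) (T₂ p) := lt_min (lt_of_lt_of_le hb1 hp1) (lt_of_lt_of_le hb2 hp2)
    exact absurd (hminle p) (not_le.mpr this)
  obtain ⟨f, u, hfu, hux⟩ :=
    geometric_hahn_banach_closed_point hconv.closure isClosed_closure hx
  set c₁ := f ((1:ℝ), (0:ℝ)) with hc₁def
  set c₂ := f ((0:ℝ), (1:ℝ)) with hc₂def
  have hf : ∀ a : ℝ × ℝ, f a = a.1 * c₁ + a.2 * c₂ := by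
    intro a
    have ha : a = a.1 • ((1:ℝ), (0:ℝ)) + a.2 • ((0:ℝ), (1:ℝ)) := by
      ext <;> simp
    conv_lhs => rw [ha]
    rw [map_add, map_smul, map_smul]
    simp [smul_eq_mul, hc₁def, hc₂def]
  have hfu' : ∀ a ∈ A, a.1 * c₁ + a.2 * c₂ < u := by
    intro a ha
    have := hfu a (subset_closure ha)
    rwa [hf] at this
  obtain ⟨p₀⟩ := ‹Nonempty P›
  -- c₁ ≥ 0
  have hc₁ : 0 ≤ c₁ := by
    by_contra hneg
    push_neg at hneg
    set M := (c₁ * T₁ p₀ + c₂ * T₂ p₀ - u) / c₁ with hM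
    have hc₁ne : c₁ ≠ 0 := ne_of_lt hneg
    have hMeq : c₁ * M = c₁ * T₁ p₀ + c₂ * T₂ p₀ - u := by
      rw [hM]; field_simp
    have hmem : ((T₁ p₀ - max M 0, T₂ p₀) : ℝ × ℝ) ∈ A :=
      ⟨p₀, by simp [le_max_right M 0], le_refl _⟩
    have hlt := hfu' _ hmem
    simp only at hlt
    have hMmax : c₁ * max M 0 ≤ c₁ * M :=
      mul_le_mul_of_nonpos_left (le_max_left M 0) (le_of_lt hneg)
    nlinarith
  have hc₂ : 0 ≤ c₂ := by
    by_contra hneg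
    push_neg at hneg
    set M := (c₁ * T₁ p₀ + c₂ * T₂ p₀ - u) / c₂ with hM
    have hc₂ne : c₂ ≠ 0 := ne_of_lt hneg
    have hMeq : c₂ * M = c₁ * T₁ p₀ + c₂ * T₂ p₀ - u := by
      rw [hM]; field_simp
    have hmem : ((T₁ p₀, T₂ p₀ - max M 0) : ℝ × ℝ) ∈ A :=
      ⟨p₀, le_refl _, by simp [le_max_right M 0]⟩
    have hlt := hfu' _ hmem
    simp only at hlt
    have hMmax : c₂ * max M 0 ≤ c₂ * M :=
      mul_le_mul_of_nonpos_left (le_max_left M 0) (le_of_lt hneg)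
    nlinarith
  -- c₁ + c₂ > 0
  have hpos : 0 < c₁ + c₂ := by
    rcases lt_or_eq_of_le (add_nonneg hc₁ hc₂) with h | h
    · exact h
    · exfalso
      have hc₁0 : c₁ = 0 := by linarith
      have hc₂0 : c₂ = 0 := by linarith
      have h₁ := hfu' _ (⟨p₀, le_refl _, le_refl _⟩ : ((T₁ p₀, T₂ p₀) : ℝ × ℝ) ∈ A)
      have h₂ := hux
      rw [hf] at h₂
      simp only [hc₁0, hc₂0, mul_zero] at h₁ h₂
      linarith
  set α := c₁ / (c₁ + c₂) with hαdef
  have hα : α ∈ Set.Icc (0:ℝ) 1 := by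
    constructor
    · exact div_nonneg hc₁ (le_of_lt hpos)
    · rw [div_le_one hpos]; linarith
  have hxval : u < (S + ε) * (c₁ + c₂) := by
    have := hux
    rw [hf] at this
    simp only at this
    linarith [this]
  have hsup : (⨆ p : P, (α * T₁ p + (1 - α) * T₂ p)) ≤ S + ε := by
    refine ciSup_le fun p => ?_
    have hmem := hfu' _ (⟨p, le_refl _, le_refl _⟩ : ((T₁ p, T₂ p) : ℝ × ℝ) ∈ A)
    simp only at hmem
    have key : α * T₁ p + (1 - α) * T₂ p = (c₁ * T₁ p + c₂ * T₂ p) / (c₁ + c₂) := by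
      rw [hαdef, one_sub_div hpos.ne', div_mul_eq_mul_div, div_mul_eq_mul_div, ← add_div]; congr 1; ring
    rw [key, div_le_iff₀ hpos]
    nlinarith
  calc sInf Rset ≤ ⨆ p : P, (α * T₁ p + (1 - α) * T₂ p) :=
        csInf_le hbddbelow ⟨α, hα, rfl⟩
    _ ≤ S + ε := hsup
end
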